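/- Assume m = m_1 = ⋯ = m_ℓ with n_i ≤ m for all i, and set N = n_1 + n_2 + ⋯ + n_ℓ. Let 𝒞 ⊆ ∏_{i=1}^ℓ 𝔽_q^{m×n_i} be a linear code whose dimension is a positive multiple of m and whose dual 𝒞^⊥ has at least two elements. Then the following are equivalent: (1) 𝒞^⊥ is MMCD; (2) every multi-cover X with m|X| = dim(𝒞) is an information multi-cover of 𝒞. -/

import Mathlib

open Finset

/-- The space `∏_{i=1}^ℓ 𝔽_q^{m_i × n_i}` of `ℓ`-tuples of matrices over `F`. -/
abbrev MCSpace (F : Type*) {ℓ : ℕ} (m n : Fin ℓ → ℕ) : Type _ :=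
  (i : Fin ℓ) → Matrix (Fin (m i)) (Fin (n i)) F

section Defs

variable {F : Type*} [Field F] [Fintype F] {ℓ : ℕ} {m n : Fin ℓ → ℕ}

/-- `(X, Y)` is a multi-cover of the tuple of matrices `C`: every nonzero entry of `C i`
lies in a row indexed by `X i` or a column indexed by `Y i`. -/
def IsMultiCover (X : (i : Fin ℓ) → Finset (Fin (m i))) (Y : (i : Fin ℓ) → Finset (Fin (n i)))
    (C : MCSpace F m n) : Prop :=
  ∀ i a b, C i a b ≠ 0 → a ∈ X i ∨ b ∈ Y i

/-- The size `Σ_i (|X_i| + |Y_i|)` of a multi-cover. -/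
def mcSize {ℓ : ℕ} {m n : Fin ℓ → ℕ} (X : (i : Fin ℓ) → Finset (Fin (m i)))
    (Y : (i : Fin ℓ) → Finset (Fin (n i))) : ℕ :=
  ∑ i, ((X i).card + (Y i).card)

/-- The multi-cover weight: the minimum size of a multi-cover of `C`. -/
noncomputable def wtMC (C : MCSpace F m n) : ℕ :=
  sInf {r | ∃ X Y, IsMultiCover X Y C ∧ mcSize X Y = r}

/-- The minimum multi-cover distance of a code. -/
noncomputable def dMC (𝒞 : Set (MCSpace F m n)) : ℕ :=
  sInf {r | ∃ C ∈ 𝒞, ∃ D ∈ 𝒞, C ≠ D ∧ wtMC (C - D) = r}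

/-- The column Hamming weight: the number of nonzero columns among the matrices `C i`. -/
noncomputable def wtHC (C : MCSpace F m n) : ℕ :=
  ∑ i, Set.ncard {b : Fin (n i) | ∃ a, C i a b ≠ 0}

/-- The minimum column Hamming distance of a code. -/
noncomputable def dHC (𝒞 : Set (MCSpace F m n)) : ℕ :=
  sInf {r | ∃ C ∈ 𝒞, ∃ D ∈ 𝒞, C ≠ D ∧ wtHC (C - D) = r}

/-- The projection `π_X` removing, in each block `i`, the rows indexed by `X i` and the
columns indexed by `Y i` (the remaining rows and columns are re-indexed in order). -/
noncomputable def projMC (X : (i : Fin ℓ) → Finset (Fin (m i)))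
    (Y : (i : Fin ℓ) → Finset (Fin (n i))) (C : MCSpace F m n) :
    MCSpace F (fun i => m i - (X i).card) (fun i => n i - (Y i).card) :=
  fun i a b =>
    C i ((X i)ᶜ.orderIsoOfFin (by simp [Finset.card_compl]) a)
        ((Y i)ᶜ.orderIsoOfFin (by simp [Finset.card_compl]) b)

/-- The projection `π_X` as a linear map. -/
noncomputable def projMCLin (X : (i : Fin ℓ) → Finset (Fin (m i)))
    (Y : (i : Fin ℓ) → Finset (Fin (n i))) :
    MCSpace F m n →ₗ[F] MCSpace F (fun i => m i - (X i).card) (fun i => n i - (Y i).card) where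
  toFun := projMC X Y
  map_add' _ _ := rfl
  map_smul' _ _ := rfl

/-- The punctured code `𝒞_X = π_X(𝒞)`. -/
noncomputable def punctureMC (𝒞 : Submodule F (MCSpace F m n))
    (X : (i : Fin ℓ) → Finset (Fin (m i))) (Y : (i : Fin ℓ) → Finset (Fin (n i))) :
    Submodule F (MCSpace F (fun i => m i - (X i).card) (fun i => n i - (Y i).card)) :=
  Submodule.map (projMCLin X Y) 𝒞

/-- The subspace of tuples vanishing on all entries covered by `(X, Y)`. -/
def zeroOnMC (X : (i : Fin ℓ) → Finset (Fin (m i))) (Y : (i : Fin ℓ) → Finset (Fin (n i))) :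
    Submodule F (MCSpace F m n) where
  carrier := {C | ∀ i a b, (a ∈ X i ∨ b ∈ Y i) → C i a b = 0}
  zero_mem' := by intro i a b _; rfl
  add_mem' := by
    intro C D hC hD i a b hab
    show C i a b + D i a b = 0
    rw [hC i a b hab, hD i a b hab, add_zero]
  smul_mem' := by
    intro c C hC i a b hab
    show c * C i a b = 0
    rw [hC i a b hab, mul_zero]

/-- The shortened code `𝒞^X`. -/
noncomputable def shortenMC (𝒞 : Submodule F (MCSpace F m n))
    (X : (i : Fin ℓ) → Finset (Fin (m i))) (Y : (i : Fin ℓ) → Finset (Fin (n i))) :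
    Submodule F (MCSpace F (fun i => m i - (X i).card) (fun i => n i - (Y i).card)) :=
  Submodule.map (projMCLin X Y) (𝒞 ⊓ zeroOnMC X Y)

/-- The standard (trace / entrywise) inner product on `MCSpace F m n`. -/
def innerMC (C D : MCSpace F m n) : F := ∑ i, ∑ a, ∑ b, C i a b * D i a b

/-- The dual code with respect to the entrywise inner product. -/
def dualMC (𝒞 : Submodule F (MCSpace F m n)) : Submodule F (MCSpace F m n) where
  carrier := {D | ∀ C ∈ 𝒞, innerMC C D = 0}
  zero_mem' := by intro C _; simp [innerMC]
  add_mem' := by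
    intro D E hD hE C hC
    have h1 := hD C hC
    have h2 := hE C hC
    simp only [innerMC] at h1 h2 ⊢
    simp only [Pi.add_apply, Matrix.add_apply, mul_add, Finset.sum_add_distrib, h1, h2, add_zero]
  smul_mem' := by
    intro c D hD C hC
    have h1 := hD C hC
    simp only [innerMC] at h1 ⊢
    simp only [Pi.smul_apply, Matrix.smul_apply, smul_eq_mul, mul_left_comm, ← Finset.mul_sum,
      h1, mul_zero]

/-- `𝒞` is a maximum multi-cover distance (MMCD) code: it attains the Singleton bound,
where `j` and `δ` are the (unique) integers with `d_MC(𝒞) - 1 = Σ_{i<j} n_i + δ`,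
`0 ≤ δ ≤ n_j - 1`. -/
noncomputable def IsMMCD (𝒞 : Set (MCSpace F m n)) : Prop :=
  ∃ (j : Fin ℓ) (δ : ℕ), δ ≤ n j - 1 ∧
    dMC 𝒞 - 1 = (∑ i ∈ Finset.Iio j, n i) + δ ∧
    𝒞.ncard = (Fintype.card F) ^ ((∑ i ∈ Finset.Ici j, m i * n i) - m j * δ)

/-- The sum-rank weight. -/
noncomputable def wtSR (C : MCSpace F m n) : ℕ := ∑ i, (C i).rank

/-- The minimum sum-rank distance of a code. -/
noncomputable def dSR (𝒞 : Set (MCSpace F m n)) : ℕ :=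
  sInf {r | ∃ C ∈ 𝒞, ∃ D ∈ 𝒞, C ≠ D ∧ wtSR (C - D) = r}

/-- The cover weight of a single matrix. -/
noncomputable def coverWt {m n : ℕ} (C : Matrix (Fin m) (Fin n) F) : ℕ :=
  sInf {r | ∃ (X : Finset (Fin m)) (Y : Finset (Fin n)),
    (∀ a b, C a b ≠ 0 → a ∈ X ∨ b ∈ Y) ∧ X.card + Y.card = r}

end Defs

/-- `S_r^{m,n}`: the number of `m × n` matrices over `F` of cover weight exactly `r`. -/
noncomputable def Scount (F : Type*) [Field F] [Fintype F] (m n r : ℕ) : ℕ :=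
  Set.ncard {C : Matrix (Fin m) (Fin n) F | coverWt C = r}

/-- `(X, Y)` is an information multi-cover of `𝒞`: the projection `π^X` retaining exactly
the entries covered by `(X, Y)` is surjective on `𝒞`, i.e. every assignment of values to
the covered entries is achieved by some codeword. -/
def IsInfoMultiCover {F : Type*} [Field F] [Fintype F] {ℓ : ℕ} {m n : Fin ℓ → ℕ}
    (𝒞 : Set (MCSpace F m n)) (X : (i : Fin ℓ) → Finset (Fin (m i)))
    (Y : (i : Fin ℓ) → Finset (Fin (n i))) : Prop :=
  ∀ V : MCSpace F m n, ∃ C ∈ 𝒞, ∀ i a b, (a ∈ X i ∨ b ∈ Y i) → C i a b = V i a b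

section DotDual
open Module
variable {F : Type*} [Field F] {ι : Type*} [Fintype ι] [DecidableEq ι]

lemma toDual_pi_apply (v u : ι → F) : (Pi.basisFun F ι).toDual v u = ∑ i, v i * u i := by
  set b := Pi.basisFun F ι
  conv_lhs => rw [← b.sum_repr u]
  rw [map_sum]
  refine Finset.sum_congr rfl fun i _ => ?_
  rw [map_smul, smul_eq_mul, Basis.toDual_apply_left, Pi.basisFun_repr, Pi.basisFun_repr,
    mul_comm]

/-- The dual code w.r.t. the dot product. -/
noncomputable def dotDual (p : Submodule F (ι → F)) : Submodule F (ι → F) :=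
  LinearMap.ker ((p.subtype.dualMap).comp (Pi.basisFun F ι).toDual)

lemma mem_dotDual {p : Submodule F (ι → F)} {v : ι → F} :
    v ∈ dotDual p ↔ ∀ u ∈ p, ∑ i, u i * v i = 0 := by
  rw [dotDual]
  constructor
  · intro h u hu
    have := LinearMap.congr_fun (LinearMap.mem_ker.mp h) ⟨u, hu⟩
    simp only [LinearMap.coe_comp, Function.comp_apply, LinearMap.dualMap_apply,
      Submodule.coe_subtype, LinearMap.zero_apply] at this
    rw [toDual_pi_apply] at this
    simpa [mul_comm] using this
  · intro h
    rw [LinearMap.mem_ker]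
    ext ⟨u, hu⟩
    simp only [LinearMap.coe_comp, Function.comp_apply, LinearMap.dualMap_apply,
      Submodule.coe_subtype, LinearMap.zero_apply]
    rw [toDual_pi_apply]
    simpa [mul_comm] using h u hu

lemma dotDual_finrank (p : Submodule F (ι → F)) :
    finrank F (dotDual p) + finrank F p = Fintype.card ι := by
  classical
  set ψ := ((p.subtype.dualMap).comp (Pi.basisFun F ι).toDual) with hψ
  have hsurj : Function.Surjective ψ := by
    apply Function.Surjective.comp (LinearMap.dualMap_surjective_of_injective p.injective_subtype)
    exact (Pi.basisFun F ι).toDualEquiv.surjective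
  have := LinearMap.finrank_range_add_finrank_ker ψ
  rw [LinearMap.range_eq_top.mpr hsurj, finrank_top, Subspace.dual_finrank_eq,
    Module.finrank_pi] at this
  rw [add_comm] at this
  exact this

lemma dotDual_exists_ne_zero {p : Submodule F (ι → F)} (hp : p ≠ ⊤) :
    ∃ v ∈ dotDual p, v ≠ 0 := by
  rw [← Submodule.ne_bot_iff]
  intro hbot
  have h1 := dotDual_finrank p
  rw [hbot, finrank_bot, zero_add] at h1
  have h2 : finrank F p < finrank F (ι → F) := Submodule.finrank_lt hp
  rw [Module.finrank_pi, h1] at h2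
  exact lt_irrefl _ h2

end DotDual


section Bridge
open Module

variable {F : Type*} [Field F] [Fintype F] {ℓ : ℕ} {m n : Fin ℓ → ℕ}

/-- The linear equivalence between `MCSpace F m n` and functions on the sigma index type. -/
noncomputable def mcEquiv : MCSpace F m n ≃ₗ[F] ((Σ i : Fin ℓ, Fin (m i) × Fin (n i)) → F) where
  toFun C x := C x.1 x.2.1 x.2.2
  invFun f i a b := f ⟨i, (a, b)⟩
  map_add' _ _ := rfl
  map_smul' _ _ := rfl
  left_inv _ := rfl
  right_inv f := by funext ⟨i, a, b⟩; rfl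

lemma sigma_sum {M : Type*} [AddCommMonoid M]
    (f : (Σ i : Fin ℓ, Fin (m i) × Fin (n i)) → M) :
    ∑ x : (Σ i : Fin ℓ, Fin (m i) × Fin (n i)), f x = ∑ i, ∑ a, ∑ b, f ⟨i, (a, b)⟩ := by
  rw [← Finset.univ_sigma_univ, Finset.sum_sigma]
  exact Finset.sum_congr rfl fun i _ => by rw [Fintype.sum_prod_type]

lemma innerMC_eq_sum (C D : MCSpace F m n) :
    innerMC C D = ∑ x : (Σ i : Fin ℓ, Fin (m i) × Fin (n i)),
      C x.1 x.2.1 x.2.2 * D x.1 x.2.1 x.2.2 := by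
  rw [innerMC, sigma_sum]

instance : Module.Finite F (MCSpace F m n) :=
  Module.Finite.equiv (mcEquiv (F := F) (m := m) (n := n)).symm

lemma map_mcEquiv_dualMC (𝒞 : Submodule F (MCSpace F m n)) :
    Submodule.map (mcEquiv.toLinearMap) (dualMC 𝒞)
      = dotDual (Submodule.map (mcEquiv (F := F) (m := m) (n := n)).toLinearMap 𝒞) := by
  ext f
  rw [Submodule.mem_map_equiv, mem_dotDual]
  constructor
  · intro hf u hu
    rw [Submodule.mem_map] at hu
    obtain ⟨C, hC, rfl⟩ := hu
    have := hf C hC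
    rwa [innerMC_eq_sum, show (mcEquiv.symm f : MCSpace F m n) = mcEquiv.symm f from rfl] at this
  · intro hf C hC
    have := hf (mcEquiv.toLinearMap C) (Submodule.mem_map_of_mem hC)
    rwa [innerMC_eq_sum]

lemma finrank_dualMC (𝒞 : Submodule F (MCSpace F m n)) :
    finrank F (dualMC 𝒞) + finrank F 𝒞 = ∑ i, m i * n i := by
  have h := dotDual_finrank (Submodule.map (mcEquiv (F := F) (m := m) (n := n)).toLinearMap 𝒞)
  rw [← map_mcEquiv_dualMC, LinearEquiv.finrank_map_eq, LinearEquiv.finrank_map_eq,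
    Fintype.card_sigma] at h
  simpa using h

end Bridge


section Cover
open Module

variable {F : Type*} [Field F] [Fintype F] {ℓ : ℕ} {m n : Fin ℓ → ℕ}

/-- The projection onto covered coordinates. -/
noncomputable def covProj (X : (i : Fin ℓ) → Finset (Fin (m i)))
    (Y : (i : Fin ℓ) → Finset (Fin (n i))) :
    MCSpace F m n →ₗ[F]
      ({x : Σ i : Fin ℓ, Fin (m i) × Fin (n i) // x.2.1 ∈ X x.1 ∨ x.2.2 ∈ Y x.1} → F) where
  toFun C s := C s.1.1 s.1.2.1 s.1.2.2
  map_add' _ _ := rfl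
  map_smul' _ _ := rfl

lemma isInfo_iff_map_top (𝒞 : Submodule F (MCSpace F m n))
    (X : (i : Fin ℓ) → Finset (Fin (m i))) (Y : (i : Fin ℓ) → Finset (Fin (n i))) :
    IsInfoMultiCover (𝒞 : Set (MCSpace F m n)) X Y
      ↔ Submodule.map (covProj X Y) 𝒞 = ⊤ := by
  classical
  constructor
  · intro h
    rw [Submodule.eq_top_iff']
    intro W
    obtain ⟨C, hC, hmatch⟩ :=
      h (fun i a b => if hc : (a ∈ X i ∨ b ∈ Y i) then W ⟨⟨i, (a, b)⟩, hc⟩ else 0)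
    refine ⟨C, hC, funext fun s => ?_⟩
    obtain ⟨⟨i, a, b⟩, hs⟩ := s
    have := hmatch i a b hs
    exact (by simpa [dif_pos hs] using this : C i a b = W ⟨⟨i, (a, b)⟩, hs⟩)
  · intro h V
    have hmem : covProj X Y V ∈ Submodule.map (covProj X Y) 𝒞 := by rw [h]; trivial
    obtain ⟨C, hC, hCV⟩ := hmem
    exact ⟨C, hC, fun i a b hc => congrFun hCV ⟨⟨i, (a, b)⟩, hc⟩⟩

lemma info_of_no_dual_word (𝒞 : Submodule F (MCSpace F m n))
    (X : (i : Fin ℓ) → Finset (Fin (m i))) (Y : (i : Fin ℓ) → Finset (Fin (n i)))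
    (h : ∀ D ∈ dualMC 𝒞, IsMultiCover X Y D → D = 0) :
    IsInfoMultiCover (𝒞 : Set (MCSpace F m n)) X Y := by
  classical
  rw [isInfo_iff_map_top]
  by_contra hne
  obtain ⟨v, hv, hv0⟩ := dotDual_exists_ne_zero hne
  set D : MCSpace F m n :=
    fun i a b => if hc : (a ∈ X i ∨ b ∈ Y i) then v ⟨⟨i, (a, b)⟩, hc⟩ else 0 with hD
  have hcov : IsMultiCover X Y D := by
    intro i a b hne0
    by_contra hc
    exact hne0 (dif_neg hc)
  have hmem : D ∈ dualMC 𝒞 := by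
    intro C hC
    rw [innerMC_eq_sum]
    have hzero : ∀ x ∈ (Finset.univ : Finset (Σ i : Fin ℓ, Fin (m i) × Fin (n i))),
        (fun x : Σ i : Fin ℓ, Fin (m i) × Fin (n i) =>
          C x.1 x.2.1 x.2.2 * D x.1 x.2.1 x.2.2) x ≠ 0 →
        (x.2.1 ∈ X x.1 ∨ x.2.2 ∈ Y x.1) := by
      intro x _ hfx
      by_contra hP
      refine hfx ?_
      show C x.1 x.2.1 x.2.2 * D x.1 x.2.1 x.2.2 = 0
      rw [show D x.1 x.2.1 x.2.2 = 0 from dif_neg hP, mul_zero]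
    rw [← Finset.sum_filter_of_ne hzero]
    rw [Finset.sum_subtype
      (p := fun x : Σ i : Fin ℓ, Fin (m i) × Fin (n i) => x.2.1 ∈ X x.1 ∨ x.2.2 ∈ Y x.1)
      _ (fun x => by simp)
      (fun x : Σ i : Fin ℓ, Fin (m i) × Fin (n i) => C x.1 x.2.1 x.2.2 * D x.1 x.2.1 x.2.2)]
    have hd := (mem_dotDual.mp hv) (covProj X Y C) (Submodule.mem_map_of_mem hC)
    rw [← hd]
    refine Finset.sum_congr rfl fun s _ => ?_
    obtain ⟨⟨i, a, b⟩, hs⟩ := s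
    show C i a b * D i a b = covProj X Y C ⟨⟨i, (a, b)⟩, hs⟩ * v ⟨⟨i, (a, b)⟩, hs⟩
    rw [show D i a b = v ⟨⟨i, (a, b)⟩, hs⟩ from dif_pos hs]
    rfl
  have hD0 : D ≠ 0 := by
    intro h0
    apply hv0
    funext s
    obtain ⟨⟨i, a, b⟩, hs⟩ := s
    have : D i a b = 0 := by rw [h0]; rfl
    rwa [show D i a b = v ⟨⟨i, (a, b)⟩, hs⟩ from dif_pos hs] at this
  exact hD0 (h D hmem hcov)

lemma no_dual_word_of_info (𝒞 : Submodule F (MCSpace F m n))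
    (X : (i : Fin ℓ) → Finset (Fin (m i))) (Y : (i : Fin ℓ) → Finset (Fin (n i)))
    (hinfo : IsInfoMultiCover (𝒞 : Set (MCSpace F m n)) X Y) :
    ∀ D ∈ dualMC 𝒞, IsMultiCover X Y D → D = 0 := by
  classical
  intro D hD hcov
  by_contra hne
  have : ∃ x : Σ i : Fin ℓ, Fin (m i) × Fin (n i), D x.1 x.2.1 x.2.2 ≠ 0 := by
    by_contra hall
    push_neg at hall
    exact hne (funext fun i => funext fun a => funext fun b => hall ⟨i, (a, b)⟩)
  obtain ⟨x₀, hx₀⟩ := this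
  set V : MCSpace F m n :=
    fun i a b => if (⟨i, (a, b)⟩ : Σ i : Fin ℓ, Fin (m i) × Fin (n i)) = x₀ then 1 else 0 with hV
  obtain ⟨C, hC, hmatch⟩ := hinfo V
  have h0 : innerMC C D = 0 := hD C hC
  rw [innerMC_eq_sum] at h0
  have hterm : ∀ x : Σ i : Fin ℓ, Fin (m i) × Fin (n i),
      C x.1 x.2.1 x.2.2 * D x.1 x.2.1 x.2.2 = (if x = x₀ then 1 else 0) * D x.1 x.2.1 x.2.2 := by
    intro x
    by_cases hDx : D x.1 x.2.1 x.2.2 = 0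
    · rw [hDx, mul_zero, mul_zero]
    · have hc := hcov x.1 x.2.1 x.2.2 hDx
      have := hmatch x.1 x.2.1 x.2.2 hc
      rw [this, hV]
    
  rw [Finset.sum_congr rfl (fun x _ => hterm x)] at h0
  rw [Finset.sum_eq_single x₀ (fun x _ hx => by rw [if_neg hx, zero_mul])
    (fun h => absurd (Finset.mem_univ x₀) h)] at h0
  rw [if_pos rfl, one_mul] at h0
  exact hx₀ h0

end Cover


section Comb
open Module

variable {F : Type*} [Field F] [Fintype F] {ℓ : ℕ} {m n : Fin ℓ → ℕ}

omit [Fintype F] in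
lemma isMultiCover_mono {X X' : (i : Fin ℓ) → Finset (Fin (m i))}
    {Y Y' : (i : Fin ℓ) → Finset (Fin (n i))} {C : MCSpace F m n}
    (hX : ∀ i, X i ⊆ X' i) (hY : ∀ i, Y i ⊆ Y' i) (h : IsMultiCover X Y C) :
    IsMultiCover X' Y' C := by
  intro i a b hne
  rcases h i a b hne with h' | h'
  · exact Or.inl (hX i h')
  · exact Or.inr (hY i h')

lemma sum_card_insert {α : Fin ℓ → Type*} [∀ i, Fintype (α i)] [∀ i, DecidableEq (α i)]
    (X : (i : Fin ℓ) → Finset (α i)) (i : Fin ℓ) (a : α i) (ha : a ∉ X i) :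
    ∑ j, ((Function.update X i (insert a (X i))) j).card = (∑ j, (X j).card) + 1 := by
  classical
  rw [← Finset.sum_erase_add _ _ (Finset.mem_univ i),
    ← Finset.sum_erase_add _ (fun j => (X j).card) (Finset.mem_univ i)]
  rw [Finset.sum_congr rfl (fun j hj => by
    rw [Function.update_of_ne (Finset.ne_of_mem_erase hj)])]
  rw [Function.update_self, Finset.card_insert_of_notMem ha]
  ring

lemma exists_cover_size_eq (X : (i : Fin ℓ) → Finset (Fin (m i)))
    (Y : (i : Fin ℓ) → Finset (Fin (n i))) (s : ℕ)
    (h1 : mcSize X Y ≤ s) (h2 : s ≤ ∑ i, (m i + n i)) :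
    ∃ X' Y', (∀ i, X i ⊆ X' i) ∧ (∀ i, Y i ⊆ Y' i) ∧ mcSize X' Y' = s := by
  classical
  induction s with
  | zero => exact ⟨X, Y, fun _ => Finset.Subset.refl _, fun _ => Finset.Subset.refl _,
      Nat.le_zero.mp h1⟩
  | succ s ih =>
    rcases Nat.lt_or_ge (mcSize X Y) (s + 1) with hlt | hge
    · obtain ⟨X', Y', hX, hY, hsz⟩ := ih (Nat.lt_succ_iff.mp hlt) (le_trans (Nat.le_succ s) h2)
      have hroom : ∃ i, (X' i).card < m i ∨ (Y' i).card < n i := by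
        by_contra hall
        push_neg at hall
        have hle : ∑ i, (m i + n i) ≤ mcSize X' Y' :=
          Finset.sum_le_sum fun i _ => add_le_add (hall i).1 (hall i).2
        omega
      obtain ⟨i, hi | hi⟩ := hroom
      · have hne : X' i ≠ Finset.univ := by
          intro hu
          rw [hu, Finset.card_univ, Fintype.card_fin] at hi
          omega
        obtain ⟨a, ha⟩ : ∃ a, a ∉ X' i := by
          by_contra hall
          push_neg at hall
          exact hne (Finset.eq_univ_iff_forall.mpr hall)
        refine ⟨Function.update X' i (insert a (X' i)), Y', ?_, hY, ?_⟩
        · intro j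
          by_cases hji : j = i
          · subst hji
            rw [Function.update_self]
            exact (hX j).trans (Finset.subset_insert a (X' j))
          · rw [Function.update_of_ne hji]
            exact hX j
        · rw [mcSize, Finset.sum_add_distrib]
          rw [mcSize, Finset.sum_add_distrib] at hsz
          rw [sum_card_insert X' i a ha]
          omega
      · have hne : Y' i ≠ Finset.univ := by
          intro hu
          rw [hu, Finset.card_univ, Fintype.card_fin] at hi
          omega
        obtain ⟨b, hb⟩ : ∃ b, b ∉ Y' i := by
          by_contra hall
          push_neg at hall
          exact hne (Finset.eq_univ_iff_forall.mpr hall)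
        refine ⟨X', Function.update Y' i (insert b (Y' i)), hX, ?_, ?_⟩
        · intro j
          by_cases hji : j = i
          · subst hji
            rw [Function.update_self]
            exact (hY j).trans (Finset.subset_insert b (Y' j))
          · rw [Function.update_of_ne hji]
            exact hY j
        · rw [mcSize, Finset.sum_add_distrib]
          rw [mcSize, Finset.sum_add_distrib] at hsz
          rw [sum_card_insert Y' i b hb]
          omega
    · exact ⟨X, Y, fun _ => Finset.Subset.refl _, fun _ => Finset.Subset.refl _,
        le_antisymm h1 hge⟩

lemma exists_cols_size_eq (s : ℕ) (hs : s ≤ ∑ i, n i) :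
    ∃ Y : (i : Fin ℓ) → Finset (Fin (n i)), ∑ i, (Y i).card = s := by
  classical
  induction s with
  | zero => exact ⟨fun _ => ∅, by simp⟩
  | succ s ih =>
    obtain ⟨Y, hY⟩ := ih (le_trans (Nat.le_succ s) hs)
    have hroom : ∃ i, (Y i).card < n i := by
      by_contra hall
      push_neg at hall
      have := Finset.sum_le_sum (s := Finset.univ) fun i (_ : i ∈ Finset.univ) => hall i
      omega
    obtain ⟨i, hi⟩ := hroom
    have hne : Y i ≠ Finset.univ := by
      intro hu
      rw [hu, Finset.card_univ, Fintype.card_fin] at hi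
      omega
    obtain ⟨b, hb⟩ : ∃ b, b ∉ Y i := by
      by_contra hall
      push_neg at hall
      exact hne (Finset.eq_univ_iff_forall.mpr hall)
    exact ⟨Function.update Y i (insert b (Y i)), by rw [sum_card_insert Y i b hb, hY]⟩

end Comb


section WtD
open Module

variable {F : Type*} [Field F] [Fintype F] {ℓ : ℕ} {m n : Fin ℓ → ℕ}

lemma exists_cover_wtMC (C : MCSpace F m n) :
    ∃ X Y, IsMultiCover X Y C ∧ mcSize X Y = wtMC C :=
  Nat.sInf_mem (⟨_, fun _ => Finset.univ, fun _ => ∅,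
    fun _ a _ _ => Or.inl (Finset.mem_univ a), rfl⟩ :
    {r | ∃ X Y, IsMultiCover X Y C ∧ mcSize X Y = r}.Nonempty)

lemma wtMC_le_of_cover {C : MCSpace F m n} {X : (i : Fin ℓ) → Finset (Fin (m i))}
    {Y : (i : Fin ℓ) → Finset (Fin (n i))} (h : IsMultiCover X Y C) :
    wtMC C ≤ mcSize X Y :=
  Nat.sInf_le ⟨X, Y, h, rfl⟩

lemma dMC_le_wt (𝒞 : Submodule F (MCSpace F m n)) {E : MCSpace F m n}
    (hE : E ∈ 𝒞) (hne : E ≠ 0) :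
    dMC (𝒞 : Set (MCSpace F m n)) ≤ wtMC E :=
  Nat.sInf_le ⟨E, hE, 0, 𝒞.zero_mem, hne, by rw [sub_zero]⟩

lemma finrank_ge_of_info_cols (𝒞 : Submodule F (MCSpace F m n))
    (Y : (i : Fin ℓ) → Finset (Fin (n i)))
    (hinfo : IsInfoMultiCover (𝒞 : Set (MCSpace F m n))
      (fun i => (∅ : Finset (Fin (m i)))) Y) :
    ∑ i, (m i) * (Y i).card ≤ finrank F 𝒞 := by
  classical
  rw [isInfo_iff_map_top] at hinfo
  have h1 := Submodule.finrank_map_le (covProj (fun i => (∅ : Finset (Fin (m i)))) Y) 𝒞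
  rw [hinfo, finrank_top, Module.finrank_pi] at h1
  refine le_trans (le_of_eq ?_) h1
  rw [Fintype.card_subtype, Finset.card_filter,
    sigma_sum (m := m) (n := n) (fun x =>
      if x.2.1 ∈ (∅ : Finset (Fin (m x.1))) ∨ x.2.2 ∈ Y x.1 then 1 else 0)]
  refine Finset.sum_congr rfl fun i _ => ?_
  simp only [Finset.notMem_empty, false_or]
  rw [Finset.sum_congr rfl (fun a _ => Finset.sum_boole (s := Finset.univ)
    (p := fun b => b ∈ Y i))]
  simp [Finset.filter_univ_mem, mul_comm]

lemma ncard_submodule (p : Submodule F (MCSpace F m n)) :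
    (p : Set (MCSpace F m n)).ncard = Fintype.card F ^ finrank F p := by
  classical
  rw [← Nat.card_coe_set_eq]
  haveI : Fintype ↥p := Fintype.ofFinite ↥p
  rw [Nat.card_eq_fintype_card]
  exact card_eq_pow_finrank

end WtD

/-- the dual of a linear code 𝒞 (with equal numbers of rows `m` and
`dim 𝒞` a positive multiple of `m`) is MMCD if, and only if, every multi-cover `X` with
`m|X| = dim 𝒞` is an information multi-cover of `𝒞`. -/
theorem dual_MMCD_iff_infoCovers {F : Type*} [Field F] [Fintype F] {ℓ : ℕ} (m : ℕ)
    {n : Fin ℓ → ℕ} (hm : 0 < m) (hn : ∀ i, 0 < n i) (hnm : ∀ i, n i ≤ m)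
    (𝒞 : Submodule F (MCSpace F (fun _ : Fin ℓ => m) n))
    (hdvd : m ∣ Module.finrank F 𝒞) (hpos : 0 < Module.finrank F 𝒞)
    (hdual : 1 < (dualMC 𝒞 : Set (MCSpace F (fun _ : Fin ℓ => m) n)).ncard) :
    ((dualMC 𝒞 : Set (MCSpace F (fun _ : Fin ℓ => m) n)).ncard
        = (Fintype.card F) ^ (m * ((∑ i, n i)
            - dMC (dualMC 𝒞 : Set (MCSpace F (fun _ : Fin ℓ => m) n)) + 1)))
      ↔ ∀ (X : (i : Fin ℓ) → Finset (Fin m)) (Y : (i : Fin ℓ) → Finset (Fin (n i))),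
          m * mcSize X Y = Module.finrank F 𝒞 →
          IsInfoMultiCover (𝒞 : Set (MCSpace F (fun _ : Fin ℓ => m) n)) X Y := by
  classical
  obtain ⟨t, ht⟩ := hdvd
  have htpos : 0 < t := by
    rcases Nat.eq_zero_or_pos t with h0 | h; · rw [h0, Nat.mul_zero] at ht; omega
    · exact h
  set N := ∑ i, n i with hN
  have f1 : Module.finrank F (dualMC 𝒞) + m * t = m * N := by
    have h := finrank_dualMC 𝒞
    rw [ht, ← Finset.mul_sum] at h
    exact h
  obtain ⟨A, B, hA, hB, hAB⟩ := (Set.one_lt_ncard_iff (Set.toFinite _)).mp hdual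
  have hABmem : A - B ∈ dualMC 𝒞 := (dualMC 𝒞).sub_mem hA hB
  have hABne : A - B ≠ 0 := sub_ne_zero.mpr hAB
  have h𝒟bot : dualMC 𝒞 ≠ ⊥ := by
    intro hb
    rw [hb, Submodule.mem_bot] at hABmem
    exact hABne hABmem
  have hrpos : 0 < Module.finrank F (dualMC 𝒞) := by
    rcases Nat.eq_zero_or_pos (Module.finrank F (dualMC 𝒞)) with h0 | h
    · exact absurd (Submodule.finrank_eq_zero.mp h0) h𝒟bot
    · exact h
  have htN : t < N := by
    have hlt : m * t < m * N := by omega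
    exact Nat.lt_of_mul_lt_mul_left hlt
  have hdset : {r | ∃ C ∈ (dualMC 𝒞 : Set (MCSpace F (fun _ : Fin ℓ => m) n)),
      ∃ D ∈ (dualMC 𝒞 : Set (MCSpace F (fun _ : Fin ℓ => m) n)),
      C ≠ D ∧ wtMC (C - D) = r}.Nonempty := ⟨_, A, hA, B, hB, hAB, rfl⟩
  have hdle : dMC (dualMC 𝒞 : Set (MCSpace F (fun _ : Fin ℓ => m) n)) ≤ t + 1 := by
    by_contra hgt
    push_neg at hgt
    obtain ⟨Y, hYsz⟩ := exists_cols_size_eq (n := n) (t + 1) (by rw [← hN]; omega)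
    have hnodual : ∀ D ∈ dualMC 𝒞,
        IsMultiCover (fun _ : Fin ℓ => (∅ : Finset (Fin m))) Y D → D = 0 := by
      intro D hD hcov
      by_contra hDne
      have h1 : wtMC D ≤ t + 1 := by
        refine le_trans (wtMC_le_of_cover hcov) (le_of_eq ?_)
        rw [mcSize]
        simpa using hYsz
      have h2 := dMC_le_wt (dualMC 𝒞) hD hDne
      omega
    have hinfo := info_of_no_dual_word 𝒞 _ Y hnodual
    have h3 := finrank_ge_of_info_cols 𝒞 Y hinfo
    rw [← Finset.mul_sum, hYsz, ht] at h3
    have := Nat.le_of_mul_le_mul_left h3 hm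
    omega
  have keyA : (∀ (X : (i : Fin ℓ) → Finset (Fin m)) (Y : (i : Fin ℓ) → Finset (Fin (n i))),
      m * mcSize X Y = Module.finrank F 𝒞 →
      IsInfoMultiCover (𝒞 : Set (MCSpace F (fun _ : Fin ℓ => m) n)) X Y) →
      t + 1 ≤ dMC (dualMC 𝒞 : Set (MCSpace F (fun _ : Fin ℓ => m) n)) := by
    intro hRHS
    refine le_csInf hdset ?_
    rintro r ⟨C1, hC1, D1, hD1, hne, rfl⟩
    have hE : C1 - D1 ∈ dualMC 𝒞 := (dualMC 𝒞).sub_mem hC1 hD1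
    have hEne : C1 - D1 ≠ 0 := sub_ne_zero.mpr hne
    by_contra hlt
    push_neg at hlt
    obtain ⟨X0, Y0, hcov0, hsz0⟩ := exists_cover_wtMC (C1 - D1)
    have hcap : t ≤ ∑ i : Fin ℓ, (m + n i) :=
      le_trans (le_of_lt htN) (Finset.sum_le_sum fun i _ => Nat.le_add_left _ _)
    obtain ⟨X', Y', hXs, hYs, hsz'⟩ := exists_cover_size_eq X0 Y0 t (by omega) hcap
    have hinfo := hRHS X' Y' (by rw [hsz', ht])
    exact hEne (no_dual_word_of_info 𝒞 X' Y' hinfo _ hE (isMultiCover_mono hXs hYs hcov0))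
  have keyC : t + 1 ≤ dMC (dualMC 𝒞 : Set (MCSpace F (fun _ : Fin ℓ => m) n)) →
      ∀ (X : (i : Fin ℓ) → Finset (Fin m)) (Y : (i : Fin ℓ) → Finset (Fin (n i))),
      m * mcSize X Y = Module.finrank F 𝒞 →
      IsInfoMultiCover (𝒞 : Set (MCSpace F (fun _ : Fin ℓ => m) n)) X Y := by
    intro hd X Y hXY
    have hsz : mcSize X Y = t := by
      rw [ht] at hXY
      exact Nat.eq_of_mul_eq_mul_left hm hXY
    refine info_of_no_dual_word 𝒞 X Y ?_
    intro D hD hcov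
    by_contra hDne
    have h1 : wtMC D ≤ t := by rw [← hsz]; exact wtMC_le_of_cover hcov
    have h2 := dMC_le_wt (dualMC 𝒞) hD hDne
    omega
  constructor
  · intro hLHS X Y hXY
    refine keyC ?_ X Y hXY
    rw [ncard_submodule (dualMC 𝒞)] at hLHS
    have hq : 1 < Fintype.card F := Fintype.one_lt_card
    have hexp := Nat.pow_right_injective hq hLHS
    set d := dMC (dualMC 𝒞 : Set (MCSpace F (fun _ : Fin ℓ => m) n)) with hd
    have hmul : m * (N - d + 1) + m * t = m * N := by rw [← hexp]; exact f1
    have hsum : (N - d + 1) + t = N := by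
      refine Nat.eq_of_mul_eq_mul_left hm ?_
      rw [Nat.mul_add]
      exact hmul
    omega
  · intro hRHS
    have hd1 : dMC (dualMC 𝒞 : Set (MCSpace F (fun _ : Fin ℓ => m) n)) = t + 1 :=
      le_antisymm hdle (keyA hRHS)
    rw [ncard_submodule (dualMC 𝒞), hd1]
    congr 1
    rw [show N - (t + 1) + 1 = N - t by omega]
    have hNt : m * (N - t) + m * t = m * N := by
      rw [← Nat.mul_add]
      congr 1
      omega
    omega
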